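/- arXiv:2509.21053 — 2 statements merged into one kernel-verified Lean document; each statement's English description precedes it below -/
import Mathlib

section
/- For every γ ∈ (0,2), setting Q = 2/γ + γ/2, and for every z ∈ ℂ with 0 < Re(z) < Q, the function t ↦ ( (Q/2 − z)² e^{−t} − sinh((Q/2 − z)t/2)² / ( sinh(tγ/4) · sinh(t/γ) ) ) / t is absolutely integrable on (0,∞); moreover the resulting function F_γ(z) := ∫₀^∞ ( (Q/2 − z)² e^{−t} − sinh((Q/2 − z)t/2)² / ( sinh(tγ/4) · sinh(t/γ) ) ) dt/t is holomorphic on the strip {z ∈ ℂ : 0 < Re(z) < Q}. -/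
/-!
Write `a = Q/2 - z` and `D(t) = sinh (tγ/4) sinh (t/γ)`. As `t → 0`, `D(t)` and `sinh (at/2)²`
agree with `t²/4` and `(at/2)²` up to `O(t⁴)`, so the integrand is bounded near `0`. As `t → ∞`,
`D(t)` grows like `e^{Qt/2}` because `γ/4 + 1/γ = Q/2`, while `|sinh (at/2)|² ≤ e^{|Re a| t}`;
hence for `δ ≤ Re z ≤ Q - δ` the integrand is `O(e^{-δt})`. These bounds are locally uniform
in `z`, and since the integrand is entire in `z`, Cauchy's estimate bounds its `z`-derivative
as well, so one may differentiate under the integral sign.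
-/

open MeasureTheory Complex

/-- The integrand in the definition of `log Υ_{γ/2}`. -/
noncomputable def dozzIntegrand (γ Q : ℝ) (z : ℂ) (t : ℝ) : ℂ :=
  (((Q : ℂ) / 2 - z) ^ 2 * Complex.exp (-(t : ℂ))
      - Complex.sinh (((Q : ℂ) / 2 - z) * (t : ℂ) / 2) ^ 2
        / (Complex.sinh ((t : ℂ) * (γ : ℂ) / 4) * Complex.sinh ((t : ℂ) / (γ : ℂ)))) / (t : ℂ)

/-- `F_γ = log Υ_{γ/2}` on the strip `0 < Re z < Q`. -/
noncomputable def Fg (γ Q : ℝ) (z : ℂ) : ℂ :=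
  ∫ t in Set.Ioi (0 : ℝ), dozzIntegrand γ Q z t

open Metric Filter Topology

theorem differentiableAt_integral_of_dominated {α E : Type*} [MeasurableSpace α] {μ : Measure α}
    [NormedAddCommGroup E] [NormedSpace ℂ E] {F : ℂ → α → E} {x₀ : ℂ} {r : ℝ} {bound : α → ℝ}
    (hr : 0 < r) (hF_meas : ∀ x, AEStronglyMeasurable (F x) μ)
    (hF_diff : ∀ᵐ a ∂μ, DifferentiableOn ℂ (F · a) (ball x₀ r))
    (h_bound : ∀ᵐ a ∂μ, ∀ x ∈ ball x₀ r, ‖F x a‖ ≤ bound a)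
    (bound_integrable : Integrable bound μ) :
    DifferentiableAt ℂ (fun x ↦ ∫ a, F x a ∂μ) x₀ := by
  have hF_int : Integrable (F x₀) μ :=
    bound_integrable.mono' (hF_meas x₀) (h_bound.mono fun a ha ↦ ha x₀ (mem_ball_self hr))
  have h_deriv : ∀ᵐ a ∂μ, ∀ x ∈ ball x₀ (r / 2), HasDerivAt (F · a) (deriv (F · a) x) x :=
    hF_diff.mono fun a ha x hx ↦ (ha.differentiableAt (isOpen_ball.mem_nhds
      (ball_subset_ball (by linarith) hx))).hasDerivAt
  have hF'_meas : AEStronglyMeasurable (fun a ↦ deriv (F · a) x₀) μ :=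
    aestronglyMeasurable_of_tendsto_ae (𝓝[≠] (0 : ℂ))
      (fun h ↦ ((hF_meas (x₀ + h)).sub (hF_meas x₀)).const_smul h⁻¹)
      (h_deriv.mono fun a ha ↦ (ha x₀ (mem_ball_self (half_pos hr))).tendsto_slope_zero)
  have h_bound' : ∀ᵐ a ∂μ, ∀ x ∈ ball x₀ (r / 2), ‖deriv (F · a) x‖ ≤ bound a / (r / 2) := by
    filter_upwards [hF_diff, h_bound] with a ha_diff ha_bound x hx
    have hsub : closedBall x (r / 2) ⊆ ball x₀ r := by
      intro y hy
      rw [mem_ball] at hx ⊢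
      rw [mem_closedBall] at hy
      linarith [dist_triangle y x x₀]
    exact norm_deriv_le_of_forall_mem_sphere_norm_le (half_pos hr)
      (ha_diff.diffContOnCl_ball hsub) fun y hy ↦ ha_bound y (hsub (sphere_subset_closedBall hy))
  exact (hasDerivAt_integral_of_dominated_loc_of_deriv_le (ball_mem_nhds x₀ (half_pos hr))
    (Eventually.of_forall hF_meas) hF_int hF'_meas h_bound' (bound_integrable.div_const _)
    h_deriv).2.differentiableAt

namespace Complex

theorem norm_sinh_le (w : ℂ) : ‖sinh w‖ ≤ ‖w‖ * Real.exp ‖w‖ := by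
  have h := norm_exp_sub_sum_le_norm_mul_exp w 1
  have h' := norm_exp_sub_sum_le_norm_mul_exp (-w) 1
  simp only [Finset.sum_range_one, pow_zero, Nat.factorial_zero, Nat.cast_one, div_one,
    pow_one, norm_neg] at h h'
  rw [sinh, show exp w - exp (-w) = (exp w - 1) - (exp (-w) - 1) by ring, norm_div,
    Complex.norm_ofNat]
  linarith [norm_sub_le (exp w - 1) (exp (-w) - 1)]

theorem norm_sinh_sub_self_le (w : ℂ) : ‖sinh w - w‖ ≤ ‖w‖ ^ 3 * Real.exp ‖w‖ := by
  have h := norm_exp_sub_sum_le_norm_mul_exp w 3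
  have h' := norm_exp_sub_sum_le_norm_mul_exp (-w) 3
  simp only [Finset.sum_range_succ, Finset.sum_range_zero, norm_neg] at h h'
  norm_num [Nat.factorial] at h h'
  rw [sinh, show (exp w - exp (-w)) / 2 - w
      = ((exp w - (1 + w + w ^ 2 / 2)) - (exp (-w) - (1 + -w + w ^ 2 / 2))) / 2 by ring,
    norm_div, Complex.norm_ofNat]
  linarith [norm_sub_le (exp w - (1 + w + w ^ 2 / 2)) (exp (-w) - (1 + -w + w ^ 2 / 2))]

theorem norm_sinh_le_exp_abs_re (w : ℂ) : ‖sinh w‖ ≤ Real.exp |w.re| := by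
  have h₁ : ‖exp w‖ ≤ Real.exp |w.re| := by
    rw [norm_exp]; exact Real.exp_le_exp.2 (le_abs_self _)
  have h₂ : ‖exp (-w)‖ ≤ Real.exp |w.re| := by
    rw [norm_exp, neg_re]; exact Real.exp_le_exp.2 (neg_le_abs _)
  rw [sinh, norm_div, Complex.norm_ofNat]
  linarith [norm_sub_le (exp w) (exp (-w))]

theorem norm_sinh_mul_sinh_sub_mul_le {p q : ℂ} {M : ℝ} (hp : ‖p‖ ≤ M) (hq : ‖q‖ ≤ M) :
    ‖sinh p * sinh q - p * q‖ ≤ 2 * M ^ 4 * Real.exp (2 * M) := by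
  have hM : 0 ≤ M := (norm_nonneg p).trans hp
  have h₁ : ‖sinh p - p‖ ≤ M ^ 3 * Real.exp M :=
    (norm_sinh_sub_self_le p).trans (by gcongr)
  have h₂ : ‖sinh q - q‖ ≤ M ^ 3 * Real.exp M :=
    (norm_sinh_sub_self_le q).trans (by gcongr)
  have h₃ : ‖sinh q‖ ≤ M * Real.exp M := (norm_sinh_le q).trans (by gcongr)
  have hexp : Real.exp M ≤ Real.exp (2 * M) := Real.exp_le_exp.2 (by linarith)
  calc ‖sinh p * sinh q - p * q‖ = ‖(sinh p - p) * sinh q + p * (sinh q - q)‖ := by ring_nf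
    _ ≤ ‖sinh p - p‖ * ‖sinh q‖ + ‖p‖ * ‖sinh q - q‖ := by
        grw [norm_add_le, norm_mul, norm_mul]
    _ ≤ M ^ 3 * Real.exp M * (M * Real.exp M) + M * (M ^ 3 * Real.exp M) := by gcongr
    _ = M ^ 4 * Real.exp (2 * M) + M ^ 4 * Real.exp M := by
        rw [show 2 * M = M + M by ring, Real.exp_add]; ring
    _ ≤ 2 * M ^ 4 * Real.exp (2 * M) := by
        have := mul_le_mul_of_nonneg_left hexp (pow_nonneg hM 4)
        linarith

theorem norm_sinh_mul_sinh_sub_mul_le_of_le_one {p q : ℂ} {M t : ℝ} (hM : 0 ≤ M) (ht : t ≤ 1)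
    (hp : ‖p‖ ≤ M * t) (hq : ‖q‖ ≤ M * t) :
    ‖sinh p * sinh q - p * q‖ ≤ 2 * M ^ 4 * Real.exp (2 * M) * t ^ 4 := by
  have hMt : M * t ≤ M := mul_le_of_le_one_right hM ht
  calc ‖sinh p * sinh q - p * q‖ ≤ 2 * (M * t) ^ 4 * Real.exp (2 * (M * t)) :=
        norm_sinh_mul_sinh_sub_mul_le hp hq
    _ ≤ 2 * (M * t) ^ 4 * Real.exp (2 * M) := by gcongr
    _ = 2 * M ^ 4 * Real.exp (2 * M) * t ^ 4 := by ring

end Complex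

theorem Real.sinh_mul_exp_sub_le_sinh {x₀ x : ℝ} (h : x₀ ≤ x) :
    Real.sinh x₀ * Real.exp (x - x₀) ≤ Real.sinh x := by
  have h₁ : Real.exp x₀ * Real.exp (x - x₀) = Real.exp x := by
    rw [← Real.exp_add, add_sub_cancel]
  have h₂ : Real.exp (-x) ≤ Real.exp (-x₀) * Real.exp (x - x₀) := by
    rw [← Real.exp_add]; exact Real.exp_le_exp.2 (by linarith)
  rw [Real.sinh_eq, Real.sinh_eq, div_mul_eq_mul_div, sub_mul, h₁]
  linarith

noncomputable def dozzDenom (γ t : ℝ) : ℝ := Real.sinh (t * γ / 4) * Real.sinh (t / γ)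

theorem ofReal_dozzDenom (γ t : ℝ) :
    (dozzDenom γ t : ℂ) = sinh ((t : ℂ) * γ / 4) * sinh ((t : ℂ) / γ) := by
  simp [dozzDenom]

theorem dozzIntegrand_eq (γ Q : ℝ) (z : ℂ) (t : ℝ) :
    dozzIntegrand γ Q z t = (((Q : ℂ) / 2 - z) ^ 2 * exp (-(t : ℂ))
      - sinh (((Q : ℂ) / 2 - z) * t / 2) ^ 2 / dozzDenom γ t) / t := by
  rw [ofReal_dozzDenom, dozzIntegrand]

theorem sq_div_four_le_dozzDenom {γ t : ℝ} (hγ : 0 < γ) (ht : 0 ≤ t) :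
    t ^ 2 / 4 ≤ dozzDenom γ t := by
  have hu : 0 ≤ t * γ / 4 := by positivity
  have hv : 0 ≤ t / γ := by positivity
  calc t ^ 2 / 4 = (t * γ / 4) * (t / γ) := by field_simp
    _ ≤ dozzDenom γ t := mul_le_mul (Real.self_le_sinh_iff.2 hu) (Real.self_le_sinh_iff.2 hv) hv
        (hu.trans (Real.self_le_sinh_iff.2 hu))

theorem norm_dozzDenom_sub_le {γ t : ℝ} (hγ : 0 < γ) (ht₀ : 0 ≤ t) (ht₁ : t ≤ 1) :
    ‖(dozzDenom γ t : ℂ) - t ^ 2 / 4‖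
      ≤ 2 * (γ / 4 + 1 / γ) ^ 4 * Real.exp (2 * (γ / 4 + 1 / γ)) * t ^ 4 := by
  have hp : ‖(t : ℂ) * γ / 4‖ ≤ (γ / 4 + 1 / γ) * t := by
    rw [show (t : ℂ) * γ / 4 = ((t * γ / 4 : ℝ) : ℂ) by push_cast; ring, norm_real,
      Real.norm_of_nonneg (by positivity)]
    linarith [show 0 ≤ 1 / γ * t by positivity]
  have hq : ‖(t : ℂ) / γ‖ ≤ (γ / 4 + 1 / γ) * t := by
    rw [show (t : ℂ) / γ = ((t / γ : ℝ) : ℂ) by push_cast; ring, norm_real,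
      Real.norm_of_nonneg (by positivity)]
    rw [add_mul, one_div_mul_eq_div]
    linarith [show 0 ≤ γ / 4 * t by positivity]
  have h := Complex.norm_sinh_mul_sinh_sub_mul_le_of_le_one (by positivity) ht₁ hp hq
  have hγ' : (γ : ℂ) ≠ 0 := ofReal_ne_zero.2 hγ.ne'
  rwa [show (t : ℂ) * γ / 4 * (t / γ) = t ^ 2 / 4 by field_simp, ← ofReal_dozzDenom] at h

theorem norm_ofReal_dozzDenom_ge {γ t : ℝ} (hγ : 0 < γ) (ht : 0 ≤ t) :
    t ^ 2 / 4 ≤ ‖(dozzDenom γ t : ℂ)‖ := by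
  have h := sq_div_four_le_dozzDenom hγ ht
  rwa [norm_real, Real.norm_of_nonneg ((by positivity : 0 ≤ t ^ 2 / 4).trans h)]

theorem exists_norm_sq_mul_dozzDenom_sub_sinh_sq_le {γ : ℝ} (hγ : 0 < γ) (R : ℝ) :
    ∃ C, ∀ a : ℂ, ‖a‖ ≤ R → ∀ t : ℝ, 0 ≤ t → t ≤ 1 →
      ‖a ^ 2 * (dozzDenom γ t : ℂ) - sinh (a * t / 2) ^ 2‖ ≤ C * t ^ 4 := by
  set Kγ := 2 * (γ / 4 + 1 / γ) ^ 4 * Real.exp (2 * (γ / 4 + 1 / γ))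
  set KR := 2 * (R / 2) ^ 4 * Real.exp (2 * (R / 2))
  refine ⟨R ^ 2 * Kγ + KR, fun a ha t ht₀ ht₁ ↦ ?_⟩
  have hw : ‖a * t / 2‖ ≤ R / 2 * t := by
    rw [norm_div, norm_mul, Complex.norm_of_nonneg ht₀, Complex.norm_ofNat]
    have := mul_le_mul_of_nonneg_right ha ht₀
    linarith
  have hγD := norm_dozzDenom_sub_le hγ ht₀ ht₁
  have hsw := Complex.norm_sinh_mul_sinh_sub_mul_le_of_le_one
    (div_nonneg ((norm_nonneg a).trans ha) zero_le_two) ht₁ hw hw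
  calc ‖a ^ 2 * (dozzDenom γ t : ℂ) - sinh (a * t / 2) ^ 2‖
      = ‖a ^ 2 * ((dozzDenom γ t : ℂ) - t ^ 2 / 4)
          - (sinh (a * t / 2) * sinh (a * t / 2) - a * t / 2 * (a * t / 2))‖ := by ring_nf
    _ ≤ ‖a‖ ^ 2 * ‖(dozzDenom γ t : ℂ) - t ^ 2 / 4‖
          + ‖sinh (a * t / 2) * sinh (a * t / 2) - a * t / 2 * (a * t / 2)‖ := by
        grw [norm_sub_le, norm_mul, norm_pow]
    _ ≤ R ^ 2 * (Kγ * t ^ 4) + KR * t ^ 4 := by gcongr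
    _ = (R ^ 2 * Kγ + KR) * t ^ 4 := by ring

theorem exists_norm_dozzIntegrand_le_of_le_one {γ : ℝ} (hγ : 0 < γ) (Q R : ℝ) :
    ∃ C, ∀ z : ℂ, ‖(Q : ℂ) / 2 - z‖ ≤ R → ∀ t : ℝ, 0 < t → t ≤ 1 →
      ‖dozzIntegrand γ Q z t‖ ≤ C := by
  obtain ⟨C, hC⟩ := exists_norm_sq_mul_dozzDenom_sub_sinh_sq_le hγ R
  refine ⟨2 * R ^ 2 + 4 * C, fun z hR t ht₀ ht₁ ↦ ?_⟩
  rw [dozzIntegrand_eq]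
  set a := (Q : ℂ) / 2 - z
  set D : ℂ := (dozzDenom γ t : ℂ)
  have hD : t ^ 2 / 4 ≤ ‖D‖ := norm_ofReal_dozzDenom_ge hγ ht₀.le
  have hD₀ : D ≠ 0 := norm_pos_iff.1 ((by positivity : 0 < t ^ 2 / 4).trans_le hD)
  have ht₀' : (t : ℂ) ≠ 0 := ofReal_ne_zero.2 ht₀.ne'
  have hsplit : (a ^ 2 * exp (-(t : ℂ)) - sinh (a * t / 2) ^ 2 / D) / t
      = a ^ 2 * (exp (-(t : ℂ)) - 1) / t + (a ^ 2 * D - sinh (a * t / 2) ^ 2) / (D * t) := by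
    field_simp
    ring
  have h₁ : ‖a ^ 2 * (exp (-(t : ℂ)) - 1) / t‖ ≤ 2 * R ^ 2 := by
    have hexp := norm_exp_sub_one_le (x := -(t : ℂ))
      (by rwa [norm_neg, Complex.norm_of_nonneg ht₀.le])
    rw [norm_neg, Complex.norm_of_nonneg ht₀.le] at hexp
    rw [norm_div, norm_mul, norm_pow, Complex.norm_of_nonneg ht₀.le, div_le_iff₀ ht₀]
    calc ‖a‖ ^ 2 * ‖exp (-(t : ℂ)) - 1‖ ≤ R ^ 2 * (2 * t) := by gcongr
      _ = 2 * R ^ 2 * t := by ring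
  have h₂ : ‖(a ^ 2 * D - sinh (a * t / 2) ^ 2) / (D * t)‖ ≤ 4 * C := by
    have hnum := hC a hR t ht₀.le ht₁
    have hC₀ : 0 ≤ C := nonneg_of_mul_nonneg_left ((norm_nonneg _).trans hnum) (pow_pos ht₀ 4)
    rw [norm_div, norm_mul, Complex.norm_of_nonneg ht₀.le]
    calc _ ≤ C * t ^ 4 / (t ^ 2 / 4 * t) := by gcongr
      _ = 4 * C * t := by field_simp
      _ ≤ 4 * C := mul_le_of_le_one_right (by positivity) ht₁
  rw [hsplit]
  linarith [norm_add_le (a ^ 2 * (exp (-(t : ℂ)) - 1) / t)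
    ((a ^ 2 * D - sinh (a * t / 2) ^ 2) / (D * t))]

theorem dozzDenom_one_mul_exp_le {γ Q t : ℝ} (hγ : 0 < γ) (hQ : Q = 2 / γ + γ / 2)
    (ht : 1 ≤ t) : dozzDenom γ 1 * Real.exp ((t - 1) * (Q / 2)) ≤ dozzDenom γ t := by
  have h₁ := Real.sinh_mul_exp_sub_le_sinh (x₀ := 1 * γ / 4) (x := t * γ / 4) (by gcongr)
  have h₂ := Real.sinh_mul_exp_sub_le_sinh (x₀ := 1 / γ) (x := t / γ) (by gcongr)
  have hexp : Real.exp ((t - 1) * (Q / 2))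
      = Real.exp (t * γ / 4 - 1 * γ / 4) * Real.exp (t / γ - 1 / γ) := by
    rw [← Real.exp_add, hQ]
    congr 1
    field_simp
    ring
  rw [hexp, dozzDenom, dozzDenom, mul_mul_mul_comm]
  exact mul_le_mul h₁ h₂ (by positivity) (Real.sinh_nonneg_iff.2 (by positivity))

theorem norm_dozzIntegrand_le_of_one_le {γ Q δ R : ℝ} (hγ : 0 < γ) (hQ : Q = 2 / γ + γ / 2)
    (hδ : δ ≤ 1) {z : ℂ} (h₁ : δ ≤ z.re) (h₂ : z.re ≤ Q - δ) (hR : ‖(Q : ℂ) / 2 - z‖ ≤ R)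
    {t : ℝ} (ht : 1 ≤ t) :
    ‖dozzIntegrand γ Q z t‖
      ≤ (R ^ 2 + Real.exp (Q / 2) / dozzDenom γ 1) * Real.exp (-δ * t) := by
  rw [dozzIntegrand_eq]
  set a := (Q : ℂ) / 2 - z
  have ht₀ : 0 < t := one_pos.trans_le ht
  have hD₁ : 0 < dozzDenom γ 1 := (by norm_num : (0 : ℝ) < 1 ^ 2 / 4).trans_le
    (sq_div_four_le_dozzDenom hγ zero_le_one)
  have hD := dozzDenom_one_mul_exp_le hγ hQ ht
  have hD₀ : 0 < dozzDenom γ t := (mul_pos hD₁ (Real.exp_pos _)).trans_le hD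
  have hre : |(a * t / 2).re| ≤ (Q / 2 - δ) * t / 2 := by
    have : (a * t / 2).re = (Q / 2 - z.re) * t / 2 := by simp [a]
    rw [this, abs_div, abs_mul, abs_of_pos ht₀, abs_two]
    gcongr
    exact abs_le.2 ⟨by linarith, by linarith⟩
  have hsinh : ‖sinh (a * t / 2) ^ 2 / (dozzDenom γ t : ℂ)‖
      ≤ Real.exp (Q / 2) / dozzDenom γ 1 * Real.exp (-δ * t) := by
    rw [norm_div, norm_pow, norm_real, Real.norm_of_nonneg hD₀.le]
    calc ‖sinh (a * t / 2)‖ ^ 2 / dozzDenom γ t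
        ≤ Real.exp ((Q / 2 - δ) * t / 2) ^ 2 / (dozzDenom γ 1 * Real.exp ((t - 1) * (Q / 2))) := by
          gcongr
          exact (norm_sinh_le_exp_abs_re _).trans (Real.exp_le_exp.2 hre)
      _ = Real.exp (Q / 2) / dozzDenom γ 1 * Real.exp (-δ * t) := by
          rw [← Real.exp_nat_mul, div_mul_eq_mul_div, ← Real.exp_add,
            mul_comm (dozzDenom γ 1), ← div_div, ← Real.exp_sub]
          congr 2
          push_cast
          ring
  have hexp : ‖a ^ 2 * exp (-(t : ℂ))‖ ≤ R ^ 2 * Real.exp (-δ * t) := by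
    rw [norm_mul, norm_pow, norm_exp, neg_re, ofReal_re]
    gcongr
    nlinarith
  calc ‖(a ^ 2 * exp (-(t : ℂ)) - sinh (a * t / 2) ^ 2 / (dozzDenom γ t : ℂ)) / t‖
      ≤ ‖a ^ 2 * exp (-(t : ℂ)) - sinh (a * t / 2) ^ 2 / (dozzDenom γ t : ℂ)‖ := by
        rw [norm_div, norm_real, Real.norm_of_nonneg ht₀.le]
        exact div_le_self (norm_nonneg _) ht
    _ ≤ (R ^ 2 + Real.exp (Q / 2) / dozzDenom γ 1) * Real.exp (-δ * t) := by
        grw [norm_sub_le, hexp, hsinh]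
        rw [add_mul]

theorem exists_ball_norm_dozzIntegrand_le {γ Q : ℝ} (hγ : 0 < γ) (hQ : Q = 2 / γ + γ / 2)
    {z₀ : ℂ} (h₁ : 0 < z₀.re) (h₂ : z₀.re < Q) :
    ∃ r > 0, ∃ δ > 0, ∃ C, ∀ z ∈ ball z₀ r, ∀ t > 0,
      ‖dozzIntegrand γ Q z t‖ ≤ C * Real.exp (-δ * t) := by
  set r := min 1 (min z₀.re (Q - z₀.re)) / 2 with hr_def
  have hr : 0 < r := by positivity
  have hr₁ : r ≤ 1 := by linarith [min_le_left 1 (min z₀.re (Q - z₀.re))]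
  have hr₂ : 2 * r ≤ z₀.re := by
    linarith [min_le_right 1 (min z₀.re (Q - z₀.re)), min_le_left z₀.re (Q - z₀.re)]
  have hr₃ : 2 * r ≤ Q - z₀.re := by
    linarith [min_le_right 1 (min z₀.re (Q - z₀.re)), min_le_right z₀.re (Q - z₀.re)]
  set R := ‖(Q : ℂ) / 2 - z₀‖ + r
  obtain ⟨C₁, hC₁⟩ := exists_norm_dozzIntegrand_le_of_le_one hγ Q R
  refine ⟨r, hr, r, hr, max (C₁ * Real.exp 1) (R ^ 2 + Real.exp (Q / 2) / dozzDenom γ 1),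
    fun z hz t ht ↦ ?_⟩
  rw [mem_ball, dist_eq] at hz
  have hre : |z.re - z₀.re| < r := (sub_re z z₀ ▸ abs_re_le_norm (z - z₀)).trans_lt hz
  have hR : ‖(Q : ℂ) / 2 - z‖ ≤ R := by
    rw [show (Q : ℂ) / 2 - z = ((Q : ℂ) / 2 - z₀) - (z - z₀) by ring]
    exact (norm_sub_le _ _).trans (add_le_add le_rfl hz.le)
  rcases le_or_gt t 1 with ht₁ | ht₁
  · have hf := hC₁ z hR t ht ht₁
    calc ‖dozzIntegrand γ Q z t‖ ≤ C₁ := hf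
      _ ≤ C₁ * Real.exp 1 * Real.exp (-r * t) := by
          rw [mul_assoc, ← Real.exp_add]
          exact le_mul_of_one_le_right ((norm_nonneg _).trans hf)
            (Real.one_le_exp (by nlinarith))
      _ ≤ _ := by gcongr; exact le_max_left _ _
  · exact (norm_dozzIntegrand_le_of_one_le hγ hQ hr₁ (by linarith [(abs_lt.1 hre).1])
      (by linarith [(abs_lt.1 hre).2]) hR ht₁.le).trans (by gcongr; exact le_max_right _ _)

theorem integrable_and_holomorphic_logUpsilon
    (γ : ℝ) (hγ : γ ∈ Set.Ioo (0 : ℝ) 2) (Q : ℝ) (hQ : Q = 2 / γ + γ / 2) :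
    (∀ z : ℂ, 0 < z.re → z.re < Q →
      IntegrableOn (fun t : ℝ => dozzIntegrand γ Q z t) (Set.Ioi (0 : ℝ)) volume) ∧
    DifferentiableOn ℂ (Fg γ Q) {z : ℂ | 0 < z.re ∧ z.re < Q} := by
  have hmeas (z : ℂ) : AEStronglyMeasurable (dozzIntegrand γ Q z) (volume.restrict (Set.Ioi 0)) :=
    (by unfold dozzIntegrand; fun_prop : Measurable (dozzIntegrand γ Q z)).aestronglyMeasurable
  have hdiff (t : ℝ) : Differentiable ℂ (dozzIntegrand γ Q · t) := by
    unfold dozzIntegrand; fun_prop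
  refine ⟨fun z h₁ h₂ ↦ ?_, fun z ⟨h₁, h₂⟩ ↦ ?_⟩
  all_goals
    obtain ⟨r, hr, δ, hδ, C, hC⟩ := exists_ball_norm_dozzIntegrand_le hγ.1 hQ h₁ h₂
    have hbound : ∀ᵐ t ∂volume.restrict (Set.Ioi 0), ∀ x ∈ ball z r,
        ‖dozzIntegrand γ Q x t‖ ≤ C * Real.exp (-δ * t) :=
      (ae_restrict_iff' measurableSet_Ioi).2 (Eventually.of_forall fun t ht x hx ↦ hC x hx t ht)
    have hint : IntegrableOn (fun t ↦ C * Real.exp (-δ * t)) (Set.Ioi 0) :=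
      (exp_neg_integrableOn_Ioi 0 hδ).const_mul C
  · exact hint.mono' (hmeas z) (hbound.mono fun t ht ↦ ht z (mem_ball_self hr))
  · exact (differentiableAt_integral_of_dominated hr hmeas
      (Eventually.of_forall fun t ↦ (hdiff t).differentiableOn) hbound hint).differentiableWithinAt
end

section
/- Let γ > 0 and Q = 2/γ + γ/2. For every E ∈ ℝ, if ψ : ℝ → ℂ is twice continuously differentiable, satisfies −(1/2)ψ''(c) + (Q²/2 + e^{γc})ψ(c) = E·ψ(c) for all c ∈ ℝ, and ∫_ℝ |ψ(c)|² dc < ∞, then ψ is identically zero. In other words, the toy-model Liouville Hamiltonian H_mod = −(1/2)d²/dc² + Q²/2 + e^{γc} has no L² eigenfunctions; its spectrum [Q²/2, ∞) is purely continuous. -/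
/-!
Multiplying by 2, an eigenfunction solves `ψ'' = (V₀ + 2 e^{γc}) ψ` with `V₀ = Q² - 2E`, and
applying continuous linear functionals reduces the claim to real solutions `u ∈ L²`.

If `V₀ ≥ 0`, then `(u²)'' = 2u'² + 2Vu² ≥ 0`, and a convex integrable function on `ℝ` is `≤ 0`.

If `V₀ = -k² < 0`, the energy `H = u'² + k²u²` satisfies `|H'| = |2wuu'| ≤ (w/k) H` with
`w = 2e^{γc}` integrable at `-∞`, so by a Grönwall argument `H` stays between two positive
constants on a half-line `(-∞, b]`. Then `(uu')' = u'² + (w - k²)u² ≥ H - 2k²u²`, and integrating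
from `a` to `b` shows that `uu'` is unbounded below as `a → -∞`, although `|uu'| ≤ H/(2k)`.
-/

open MeasureTheory Complex

open Set Filter

theorem MeasureTheory.Integrable.exists_lt_of_measure_eq_top {α : Type*} [MeasurableSpace α]
    {μ : Measure α} {f : α → ℝ} (hf : Integrable f μ) {s : Set α} (hs : μ s = ⊤) {ε : ℝ}
    (hε : 0 < ε) : ∃ x ∈ s, f x < ε := by
  by_contra! h
  exact (hf.measure_norm_ge_lt_top hε).ne
    (measure_mono_top (fun x hx => (h x hx).trans (le_abs_self _)) hs)

theorem ConvexOn.le_on_Ici_or_le_on_Iic {f : ℝ → ℝ} (hf : ConvexOn ℝ univ f) (x₀ : ℝ) :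
    (∀ x ≥ x₀, f x₀ ≤ f x) ∨ ∀ x ≤ x₀, f x₀ ≤ f x := by
  by_contra! h
  obtain ⟨⟨b, hb, hfb⟩, ⟨a, ha, hfa⟩⟩ := h
  have hx₀ : x₀ ∈ segment ℝ a b := by rw [segment_eq_Icc (ha.trans hb)]; exact ⟨ha, hb⟩
  exact (hf.le_on_segment (mem_univ a) (mem_univ b) hx₀).not_gt (max_lt hfa hfb)

theorem ConvexOn.nonpos_of_integrable {f : ℝ → ℝ} (hf : ConvexOn ℝ univ f)
    (hfi : Integrable f) (x₀ : ℝ) : f x₀ ≤ 0 := by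
  by_contra! hpos
  rcases hf.le_on_Ici_or_le_on_Iic x₀ with h | h
  · obtain ⟨x, hx, hlt⟩ := hfi.exists_lt_of_measure_eq_top Real.volume_Ici hpos
    exact (h x hx).not_gt hlt
  · obtain ⟨x, hx, hlt⟩ := hfi.exists_lt_of_measure_eq_top Real.volume_Iic hpos
    exact (h x hx).not_gt hlt

theorem monotone_mul_exp_of_abs_deriv_le {H H' φ φ' : ℝ → ℝ}
    (hH : ∀ x, HasDerivAt H (H' x) x) (hφ : ∀ x, HasDerivAt φ (φ' x) x)
    (hH' : ∀ x, |H' x| ≤ φ' x * H x) : Monotone fun x => H x * Real.exp (φ x) := by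
  have hd : ∀ x, HasDerivAt (fun x => H x * Real.exp (φ x))
      (H' x * Real.exp (φ x) + H x * (Real.exp (φ x) * φ' x)) x :=
    fun x => (hH x).mul (hφ x).exp
  refine monotone_of_deriv_nonneg (fun x => (hd x).differentiableAt) fun x => ?_
  rw [(hd x).deriv]
  have : 0 ≤ H' x + φ' x * H x := by linarith [neg_abs_le (H' x), hH' x]
  nlinarith [Real.exp_pos (φ x)]

theorem antitone_mul_exp_neg_of_abs_deriv_le {H H' φ φ' : ℝ → ℝ}
    (hH : ∀ x, HasDerivAt H (H' x) x) (hφ : ∀ x, HasDerivAt φ (φ' x) x)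
    (hH' : ∀ x, |H' x| ≤ φ' x * H x) : Antitone fun x => H x * Real.exp (-φ x) := by
  have hd : ∀ x, HasDerivAt (fun x => H x * Real.exp (-φ x))
      (H' x * Real.exp (-φ x) + H x * (Real.exp (-φ x) * -φ' x)) x :=
    fun x => (hH x).mul (hφ x).neg.exp
  refine antitone_of_deriv_nonpos (fun x => (hd x).differentiableAt) fun x => ?_
  rw [(hd x).deriv]
  have : H' x - φ' x * H x ≤ 0 := by linarith [le_abs_self (H' x), hH' x]
  nlinarith [Real.exp_pos (-φ x)]

theorem mul_exp_neg_le_of_abs_deriv_le {H H' φ φ' : ℝ → ℝ}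
    (hH : ∀ x, HasDerivAt H (H' x) x) (hφ : ∀ x, HasDerivAt φ (φ' x) x)
    (hH' : ∀ x, |H' x| ≤ φ' x * H x) (hH0 : ∀ x, 0 ≤ H x) (hφ0 : ∀ x, 0 ≤ φ x)
    {x b : ℝ} (hxb : x ≤ b) : H b * Real.exp (-φ b) ≤ H x :=
  calc H b * Real.exp (-φ b) ≤ H x * Real.exp (-φ x) :=
        antitone_mul_exp_neg_of_abs_deriv_le hH hφ hH' hxb
    _ ≤ H x := mul_le_of_le_one_right (hH0 x) (Real.exp_le_one_iff.2 (by linarith [hφ0 x]))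

theorem le_mul_exp_of_abs_deriv_le {H H' φ φ' : ℝ → ℝ}
    (hH : ∀ x, HasDerivAt H (H' x) x) (hφ : ∀ x, HasDerivAt φ (φ' x) x)
    (hH' : ∀ x, |H' x| ≤ φ' x * H x) (hH0 : ∀ x, 0 ≤ H x) (hφ0 : ∀ x, 0 ≤ φ x)
    {x b : ℝ} (hxb : x ≤ b) : H x ≤ H b * Real.exp (φ b) :=
  calc H x ≤ H x * Real.exp (φ x) := le_mul_of_one_le_right (hH0 x) (Real.one_le_exp (hφ0 x))
    _ ≤ H b * Real.exp (φ b) := monotone_mul_exp_of_abs_deriv_le hH hφ hH' hxb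

theorem not_bddBelow_image_Iic_of_deriv_ge {W W' g : ℝ → ℝ} {δ b : ℝ} (hδ : 0 < δ)
    (hW : ∀ x, HasDerivAt W (W' x) x) (hg : Integrable g) (hg0 : ∀ x, 0 ≤ g x)
    (hW' : ∀ x ≤ b, δ - g x ≤ W' x) : ¬BddBelow (W '' Iic b) := by
  rintro ⟨M, hM⟩
  have hWcont : Continuous W := continuous_iff_continuousAt.2 fun x => (hW x).continuousAt
  have hgrowth : ∀ a ≤ b, δ * (b - a) - ∫ x, g x ≤ W b - M := by
    intro a hab
    have hftc : ∫ x in a..b, (δ - g x) ≤ W b - W a :=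
      intervalIntegral.integral_le_sub_of_hasDeriv_right_of_le hab hWcont.continuousOn
        (fun x _ => (hW x).hasDerivWithinAt)
        (continuous_const.integrableOn_Icc.sub hg.integrableOn) fun x hx => hW' x hx.2.le
    have hgab : ∫ x in a..b, g x ≤ ∫ x, g x := by
      rw [intervalIntegral.integral_of_le hab]
      exact setIntegral_le_integral hg (Eventually.of_forall hg0)
    rw [intervalIntegral.integral_sub intervalIntegrable_const hg.intervalIntegrable,
      intervalIntegral.integral_const, smul_eq_mul] at hftc
    linarith [hM ⟨a, hab, rfl⟩]
  set X := W b - M + ∫ x, g x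
  have := hgrowth (b - (|X| + 1) / δ) (by linarith [div_pos (by positivity : 0 < |X| + 1) hδ])
  rw [sub_sub_cancel, mul_div_cancel₀ _ hδ.ne'] at this
  linarith [le_abs_self X]

theorem eq_zero_of_sq_integrable_of_potential_nonneg {u u' V : ℝ → ℝ}
    (hu : ∀ x, HasDerivAt u (u' x) x) (hu' : ∀ x, HasDerivAt u' (V x * u x) x)
    (hV : ∀ x, 0 ≤ V x) (hL2 : Integrable fun x => u x ^ 2) (x : ℝ) : u x = 0 := by
  have hsq : ∀ x, HasDerivAt (fun x => u x ^ 2) (2 * u x * u' x) x := fun x => by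
    simpa [mul_comm] using (hu x).fun_pow 2
  have hsq' : ∀ x, HasDerivAt (fun x => 2 * u x * u' x)
      (2 * u' x * u' x + 2 * u x * (V x * u x)) x :=
    fun x => ((hu x).const_mul 2).mul (hu' x)
  have hconvex : ConvexOn ℝ univ fun x => u x ^ 2 := by
    refine Monotone.convexOn_univ_of_deriv (fun x => (hsq x).differentiableAt) ?_
    rw [funext fun x => (hsq x).deriv]
    refine monotone_of_deriv_nonneg (fun x => (hsq' x).differentiableAt) fun x => ?_
    rw [(hsq' x).deriv]
    nlinarith [mul_nonneg (hV x) (sq_nonneg (u x)), mul_self_nonneg (u' x)]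
  exact pow_eq_zero_iff two_ne_zero |>.1 <|
    le_antisymm (hconvex.nonpos_of_integrable hL2 x) (sq_nonneg _)

theorem eq_zero_of_sq_integrable_of_potential_sub_sq {u u' w Φ : ℝ → ℝ} {k : ℝ} (hk : 0 < k)
    (hu : ∀ x, HasDerivAt u (u' x) x) (hu' : ∀ x, HasDerivAt u' ((w x - k ^ 2) * u x) x)
    (hw : ∀ x, 0 ≤ w x) (hΦ : ∀ x, HasDerivAt Φ (w x / k) x) (hΦ0 : ∀ x, 0 ≤ Φ x)
    (hL2 : Integrable fun x => u x ^ 2) (b : ℝ) : u b = 0 := by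
  by_contra hub
  set H : ℝ → ℝ := fun x => u' x ^ 2 + k ^ 2 * u x ^ 2 with hH_def
  have hH : ∀ x, HasDerivAt H (2 * w x * (u x * u' x)) x := fun x => by
    refine (((hu' x).fun_pow 2).add (((hu x).fun_pow 2).const_mul (k ^ 2))).congr_deriv ?_
    ring
  have hH0 : ∀ x, 0 ≤ H x := fun x => by positivity
  have hamgm : ∀ x, 2 * k * |u x * u' x| ≤ H x := fun x => by
    rw [abs_mul]
    simp only [hH_def]
    nlinarith [sq_nonneg (k * |u x| - |u' x|), sq_abs (u x), sq_abs (u' x)]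
  have hH' : ∀ x, |2 * w x * (u x * u' x)| ≤ w x / k * H x := fun x => by
    rw [abs_mul, abs_of_nonneg (by linarith [hw x] : 0 ≤ 2 * w x), div_mul_eq_mul_div,
      le_div_iff₀ hk]
    nlinarith [mul_le_mul_of_nonneg_left (hamgm x) (hw x)]
  set δ := H b * Real.exp (-Φ b)
  set B := H b * Real.exp (Φ b)
  have hδ : 0 < δ := by
    have : 0 < u b ^ 2 := by positivity
    have : 0 < H b := by positivity
    positivity
  refine not_bddBelow_image_Iic_of_deriv_ge (W := fun x => u x * u' x)
    (g := fun x => 2 * k ^ 2 * u x ^ 2) (b := b) hδ (fun x => (hu x).mul (hu' x))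
    (hL2.const_mul _) (fun x => by positivity) (fun x hx => ?_) ⟨-(B / (2 * k)), ?_⟩
  · have := mul_exp_neg_le_of_abs_deriv_le hH hΦ hH' hH0 hΦ0 hx
    nlinarith [mul_nonneg (hw x) (sq_nonneg (u x))]
  · rintro _ ⟨x, hx, rfl⟩
    have hHB : H x ≤ B := le_mul_exp_of_abs_deriv_le hH hΦ hH' hH0 hΦ0 hx
    rw [neg_le, le_div_iff₀ (by positivity)]
    nlinarith [neg_abs_le (u x * u' x), hamgm x]

theorem eq_zero_of_sq_integrable_of_exp_potential {γ a : ℝ} (hγ : 0 < γ) (ha : 0 ≤ a) (V₀ : ℝ)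
    {u u' : ℝ → ℝ} (hu : ∀ x, HasDerivAt u (u' x) x)
    (hu' : ∀ x, HasDerivAt u' ((V₀ + a * Real.exp (γ * x)) * u x) x)
    (hL2 : Integrable fun x => u x ^ 2) (x : ℝ) : u x = 0 := by
  rcases le_or_gt 0 V₀ with hV₀ | hV₀
  · exact eq_zero_of_sq_integrable_of_potential_nonneg hu hu' (fun x => by positivity) hL2 x
  set k := √(-V₀)
  have hk : 0 < k := Real.sqrt_pos.2 (by linarith)
  have hk2 : k ^ 2 = -V₀ := Real.sq_sqrt (by linarith)
  refine eq_zero_of_sq_integrable_of_potential_sub_sq hk hu (w := fun x => a * Real.exp (γ * x))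
    (Φ := fun x => a / (k * γ) * Real.exp (γ * x)) (fun x => ?_) (fun x => by positivity)
    (fun x => ?_) (fun x => by positivity) hL2 x
  · convert hu' x using 2
    rw [hk2]
    ring
  · refine (((hasDerivAt_id x).const_mul γ).exp.const_mul (a / (k * γ))).congr_deriv ?_
    simp only [id, mul_one]
    field_simp

theorem eq_zero_of_integrable_norm_sq_of_exp_potential {E : Type*} [NormedAddCommGroup E]
    [NormedSpace ℝ E] {γ a : ℝ} (hγ : 0 < γ) (ha : 0 ≤ a) (V₀ : ℝ) {ψ ψ' : ℝ → E}
    (hψ : ∀ x, HasDerivAt ψ (ψ' x) x)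
    (hψ' : ∀ x, HasDerivAt ψ' ((V₀ + a * Real.exp (γ * x)) • ψ x) x)
    (hL2 : Integrable fun x => ‖ψ x‖ ^ 2) (x : ℝ) : ψ x = 0 := by
  refine SeparatingDual.eq_zero_of_forall_dual_eq_zero (R := ℝ) fun f => ?_
  have hψc : Continuous ψ := continuous_iff_continuousAt.2 fun x => (hψ x).continuousAt
  refine eq_zero_of_sq_integrable_of_exp_potential hγ ha V₀ (u := f ∘ ψ) (u' := f ∘ ψ')
    (fun x => f.hasFDerivAt.comp_hasDerivAt x (hψ x))
    (fun x => by simpa using f.hasFDerivAt.comp_hasDerivAt x (hψ' x)) ?_ x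
  refine (hL2.const_mul (‖f‖ ^ 2)).mono' (by fun_prop) (Eventually.of_forall fun x => ?_)
  rw [Real.norm_eq_abs, abs_pow, ← mul_pow]
  exact pow_le_pow_left₀ (abs_nonneg _) (f.le_opNorm (ψ x)) 2

theorem toy_liouville_hamiltonian_no_L2_eigenfunctions_general
    (γ : ℝ) (hγ : 0 < γ) (Q : ℝ) (E : ℝ)
    (ψ : ℝ → ℂ) (hreg : ContDiff ℝ 2 ψ)
    (hode : ∀ c : ℝ,
      -(1 / 2 : ℂ) * deriv (deriv ψ) c
        + (((Q ^ 2 / 2 + Real.exp (γ * c) : ℝ) : ℂ)) * ψ c = (E : ℂ) * ψ c)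
    (hL2 : Integrable (fun c : ℝ => ‖ψ c‖ ^ 2)) :
    ∀ c : ℝ, ψ c = 0 := by
  have hψ : ∀ x, HasDerivAt ψ (deriv ψ x) x :=
    fun x => (hreg.differentiable two_ne_zero x).hasDerivAt
  have hψ' : ∀ x, HasDerivAt (deriv ψ) ((Q ^ 2 - 2 * E + 2 * Real.exp (γ * x)) • ψ x) x := by
    intro x
    refine (hreg.differentiable_deriv_two x).hasDerivAt.congr_deriv ?_
    rw [Complex.real_smul]
    push_cast at hode ⊢
    linear_combination (-2 : ℂ) * hode x
  exact eq_zero_of_integrable_norm_sq_of_exp_potential hγ zero_le_two _ hψ hψ' hL2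

theorem toy_liouville_hamiltonian_no_L2_eigenfunctions
    (γ : ℝ) (hγ : 0 < γ) (Q : ℝ) (hQ : Q = 2 / γ + γ / 2) (E : ℝ)
    (ψ : ℝ → ℂ) (hreg : ContDiff ℝ 2 ψ)
    (hode : ∀ c : ℝ,
      -(1 / 2 : ℂ) * deriv (deriv ψ) c
        + (((Q ^ 2 / 2 + Real.exp (γ * c) : ℝ) : ℂ)) * ψ c = (E : ℂ) * ψ c)
    (hL2 : Integrable (fun c : ℝ => ‖ψ c‖ ^ 2)) :
    ∀ c : ℝ, ψ c = 0 :=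
  toy_liouville_hamiltonian_no_L2_eigenfunctions_general γ hγ Q E ψ hreg hode hL2
end
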